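/- Let G be a finite cyclic group of prime order q generated by g acting faithfully on L by ν-preserving automorphisms, where ν is a surjective discrete valuation on L with residue field l. If q ≠ char(l) and g acts trivially on both O_L/m_L and m_L/m_L², then G is trivial (contradiction with faithfulness); equivalently, no element of prime order q ≠ char(l) can act trivially on both O_L/m_L and m_L/m_L² while acting nontrivially on L. -/

import Mathlib

/-!
The elements `u` of `Lˣ` with `v (g u - u) ≤ γ * v u` form a subgroup, since `g` preserves `v`.
Hypothesis `h1` puts the units of `O_L` in it and `h2` a uniformizer `π`, both for `γ = v π`;
these generate `Lˣ`, so `v (g x - x) ≤ v π * v x` for every `x`. Now take `c = g x - x`.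
As `∑_{i<q} gⁱ c = g^q x - x = 0`, we get `q c = ∑_{i<q} (c - gⁱ c)`, each term of valuation
at most `v π * v c`; since `q` is a unit of `O_L` (it is prime to the residue characteristic),
`v c ≤ v π * v c`, so `c = 0`. Thus `g = 1`, which does not have prime order.
-/

open WithZero

theorem RingAut.sum_range_pow_apply_sub {R : Type*} [Ring R] (g : R ≃+* R) (n : ℕ) (x : R) :
    ∑ i ∈ Finset.range n, (g ^ i) (g x - x) = (g ^ n) x - x := by
  calc ∑ i ∈ Finset.range n, (g ^ i) (g x - x)
      = ∑ i ∈ Finset.range n, ((g ^ (i + 1)) x - (g ^ i) x) :=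
        Finset.sum_congr rfl fun i _ ↦ by rw [map_sub, pow_succ, RingAut.mul_apply]
    _ = (g ^ n) x - x := Finset.sum_range_sub (fun i ↦ (g ^ i) x) n

namespace Valuation

variable {K Γ₀ : Type*} [Field K] [LinearOrderedCommGroupWithZero Γ₀]
  (v : Valuation K Γ₀) {g : K ≃+* K}

def boundedDisplacementUnits (hg : ∀ x, v (g x) = v x) (γ : Γ₀) : Subgroup Kˣ where
  carrier := {u | v (g u - u) ≤ γ * v u}
  one_mem' := by simp
  mul_mem' {a b} ha hb := by
    have hsplit : g (a * b) - a * b = (g a - a) * g b + a * (g b - b) := by rw [map_mul]; ring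
    simp only [Set.mem_ofPred_eq, Units.val_mul] at ha hb ⊢
    rw [hsplit, map_mul]
    refine v.map_add_le ?_ ?_
    · rw [map_mul, hg, ← mul_assoc]
      exact mul_le_mul_left ha _
    · rw [map_mul, mul_left_comm]
      exact mul_le_mul_right hb _
  inv_mem' {a} ha := by
    have ha0 : v (a : K) ≠ 0 := by simp
    have hga0 : g a ≠ 0 := by simp
    have hsplit : g (a : K)⁻¹ - (a : K)⁻¹ = -(g a - a) * (g a)⁻¹ * (a : K)⁻¹ := by
      rw [map_inv₀]; field_simp; ring
    simp only [Set.mem_ofPred_eq, Units.val_inv_eq_inv_val] at ha ⊢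
    rw [hsplit, map_mul, map_mul, map_neg, map_inv₀, map_inv₀, hg]
    calc v (g a - a) * (v a)⁻¹ * (v a)⁻¹ ≤ γ * v a * (v a)⁻¹ * (v a)⁻¹ := by gcongr
      _ = γ * (v a)⁻¹ := by rw [mul_inv_cancel_right₀ ha0]

variable {v}

theorem mem_boundedDisplacementUnits_iff {hg : ∀ x, v (g x) = v x} {γ : Γ₀} {u : Kˣ} :
    u ∈ v.boundedDisplacementUnits hg γ ↔ v (g u - u) ≤ γ * v u := Iff.rfl

theorem map_sub_le_mul_of_forall_eq_zpow (hg : ∀ x, v (g x) = v x) {π : K} (hπ0 : π ≠ 0)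
    (hval : ∀ x ≠ 0, ∃ k : ℤ, v x = v π ^ k)
    (hunit : ∀ u, v u = 1 → v (g u - u) ≤ v π) (hπ : v (g π - π) ≤ v π * v π) (x : K) :
    v (g x - x) ≤ v π * v x := by
  rcases eq_or_ne x 0 with rfl | hx0
  · simp
  obtain ⟨k, hk⟩ := hval x hx0
  set ϖ := Units.mk0 π hπ0
  set u := Units.mk0 x hx0 * (ϖ ^ k)⁻¹ with hu_def
  have hvπ : v π ≠ 0 := by simpa using hπ0
  have hu : v u = 1 := by simp [u, ϖ, hk, zpow_ne_zero k hvπ]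
  have hmem : u * ϖ ^ k ∈ v.boundedDisplacementUnits hg (v π) :=
    mul_mem (by rw [mem_boundedDisplacementUnits_iff, hu, mul_one]; exact hunit u hu)
      (zpow_mem hπ k)
  rwa [hu_def, inv_mul_cancel_right] at hmem

theorem map_pow_apply_sub_le (hg : ∀ x, v (g x) = v x) {γ : Γ₀} {c : K}
    (hc : v (g c - c) ≤ γ * v c) (i : ℕ) : v ((g ^ i) c - c) ≤ γ * v c := by
  induction i with
  | zero => simp
  | succ i ih =>
    have hsplit : (g ^ (i + 1)) c - c = g ((g ^ i) c - c) + (g c - c) := by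
      rw [pow_succ', RingAut.mul_apply, _root_.map_sub]; ring
    rw [hsplit]
    exact v.map_add_le (by rw [hg]; exact ih) hc

theorem eq_one_of_pow_eq_one_of_map_sub_le (hg : ∀ x, v (g x) = v x) {q : ℕ} (hgq : g ^ q = 1)
    (hq : v (q : K) = 1) {γ : Γ₀} (hγ : γ < 1) (hdisp : ∀ x, v (g x - x) ≤ γ * v x) :
    g = 1 := by
  ext x
  set c := g x - x
  have horbit : ∑ i ∈ Finset.range q, (g ^ i) c = 0 := by
    rw [RingAut.sum_range_pow_apply_sub, hgq, RingAut.one_apply, sub_self]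
  have hqc : (q : K) * c = ∑ i ∈ Finset.range q, -((g ^ i) c - c) := by
    simp only [neg_sub, Finset.sum_sub_distrib, horbit, Finset.sum_const, Finset.card_range,
      nsmul_eq_mul, sub_zero]
  have hle : v c ≤ γ * v c := by
    calc v c = v ((q : K) * c) := by rw [map_mul, hq, one_mul]
      _ ≤ γ * v c := by
        rw [hqc]
        exact v.map_sum_le fun i _ ↦ by rw [map_neg]; exact map_pow_apply_sub_le hg (hdisp c) i
  have hc : v c = 0 := by
    by_contra hc
    exact hγ.not_ge ((le_mul_iff_one_le_left (zero_lt_iff.mpr hc)).mp hle)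
  simpa [c, sub_eq_zero] using hc

theorem map_natCast_eq_one_of_prime {q : ℕ} (hq : q.Prime)
    (hchar : q ≠ ringChar (IsLocalRing.ResidueField v.valuationSubring)) : v (q : K) = 1 := by
  have hres : IsLocalRing.residue v.valuationSubring q ≠ 0 := by
    rw [map_natCast]
    exact fun h ↦ hchar (CharP.ringChar_of_prime_eq_zero hq h).symm
  rw [IsLocalRing.residue_ne_zero_iff_isUnit,
    (valuationSubring.integers v).isUnit_iff_valuation_eq_one, map_natCast] at hres
  exact hres

end Valuation

theorem WithZero.exists_eq_exp_neg_one_zpow {y : ℤᵐ⁰} (hy : y ≠ 0) :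
    ∃ k : ℤ, y = exp (-1) ^ k :=
  ⟨-log y, by simp [← exp_zsmul, hy]⟩

theorem stmt6_general (L : Type*) [Field L]
    (v : Valuation L (WithZero (Multiplicative ℤ)))
    (hv : Function.Surjective v)
    (q : ℕ) (hq : q.Prime)
    (hchar : q ≠ ringChar (IsLocalRing.ResidueField v.valuationSubring))
    (g : L ≃+* L)
    (hord : orderOf g = q)
    (hpres : ∀ x : L, v (g x) = v x)
    (h1 : ∀ x : L, v x ≤ 1 →
      v (g x - x) ≤ ((Multiplicative.ofAdd (-1 : ℤ) : Multiplicative ℤ) :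
        WithZero (Multiplicative ℤ)))
    (h2 : ∀ x : L, v x ≤ ((Multiplicative.ofAdd (-1 : ℤ) : Multiplicative ℤ) :
        WithZero (Multiplicative ℤ)) →
      v (g x - x) ≤ ((Multiplicative.ofAdd (-2 : ℤ) : Multiplicative ℤ) :
        WithZero (Multiplicative ℤ))) :
    False := by
  obtain ⟨π, hπ⟩ := hv (exp (-1))
  have hπ0 : π ≠ 0 := v.ne_zero_iff.mp (hπ ▸ exp_ne_zero)
  have hdisp : ∀ x, v (g x - x) ≤ v π * v x :=
    Valuation.map_sub_le_mul_of_forall_eq_zpow hpres hπ0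
      (fun x hx ↦ hπ ▸ exists_eq_exp_neg_one_zpow (by simpa using hx))
      (fun u hu ↦ hπ ▸ h1 u hu.le) (hπ ▸ h2 π hπ.le)
  have hg1 : g = 1 :=
    Valuation.eq_one_of_pow_eq_one_of_map_sub_le hpres (hord ▸ pow_orderOf_eq_one g)
      (Valuation.map_natCast_eq_one_of_prime hq hchar)
      (by rw [hπ, ← exp_zero, exp_lt_exp]; norm_num) hdisp
  rw [hg1, orderOf_one] at hord
  exact hq.ne_one hord.symm

/-- no automorphism `g ≠ 1` of `L` of prime order `q` different from the
residue characteristic, preserving a surjective discrete valuation, can induce the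
identity on both `O_L/m_L` and `m_L/m_L²`. -/
theorem stmt6 (L : Type*) [Field L]
    (v : Valuation L (WithZero (Multiplicative ℤ)))
    (hv : Function.Surjective v)
    (q : ℕ) (hq : q.Prime)
    (hchar : q ≠ ringChar (IsLocalRing.ResidueField v.valuationSubring))
    (g : L ≃+* L)
    (hg : g ≠ RingEquiv.refl L)
    (hord : orderOf g = q)
    (hpres : ∀ x : L, v (g x) = v x)
    (h1 : ∀ x : L, v x ≤ 1 →
      v (g x - x) ≤ ((Multiplicative.ofAdd (-1 : ℤ) : Multiplicative ℤ) :
        WithZero (Multiplicative ℤ)))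
    (h2 : ∀ x : L, v x ≤ ((Multiplicative.ofAdd (-1 : ℤ) : Multiplicative ℤ) :
        WithZero (Multiplicative ℤ)) →
      v (g x - x) ≤ ((Multiplicative.ofAdd (-2 : ℤ) : Multiplicative ℤ) :
        WithZero (Multiplicative ℤ))) :
    False :=
  stmt6_general L v hv q hq hchar g hord hpres h1 h2
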